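/- (Minkowski duality.) For every sublinear function p : ℝ^N → ℝ there exists a unique nonempty compact convex set K ⊆ ℝ^N such that p(x) = sup_{y ∈ K} ⟨x, y⟩ for all x ∈ ℝ^N; that is, p is the support function of a unique nonempty compact convex body, and conversely the support function of any nonempty compact convex set is sublinear. -/

import Mathlib

open RealInnerProductSpace

/-- `p : ℝ^N → ℝ` is sublinear: positively homogeneous and subadditive. -/
def Sublinear (N : ℕ) (p : EuclideanSpace ℝ (Fin N) → ℝ) : Prop :=
  (∀ t : ℝ, 0 ≤ t → ∀ x, p (t • x) = t * p x) ∧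
  (∀ x y, p (x + y) ≤ p x + p y)


/-!
A sublinear `p` is the support function of `K = {y | ∀ x, ⟪x, y⟫ ≤ p x}`: by Hahn–Banach the
linear map `t • x₀ ↦ t * p x₀` extends to a linear minorant of `p`, which touches `p` at `x₀` and
is represented by an element of `K`. The set `K` is compact because `p`, being convex on a
finite-dimensional space, is continuous and hence bounded on the unit ball. Conversely, by the
separation theorem a closed convex set is the intersection of the half-spaces
`⟪x, ·⟫ ≤ h_K x` cut out by its support function `h_K`, which gives uniqueness.
-/

open Set Metric Pointwise

section Sublinear

variable {V : Type*} [AddCommGroup V] [Module ℝ V] {p : V → ℝ}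

lemma apply_zero_of_posHomogeneous (hhom : ∀ t : ℝ, 0 ≤ t → ∀ x, p (t • x) = t * p x) : p 0 = 0 := by
  simpa using hhom 0 le_rfl 0

lemma mul_le_apply_smul_of_sublinear (hhom : ∀ t : ℝ, 0 ≤ t → ∀ x, p (t • x) = t * p x)
    (hadd : ∀ x y, p (x + y) ≤ p x + p y) (c : ℝ) (x : V) : c * p x ≤ p (c • x) := by
  rcases le_or_gt 0 c with hc | hc
  · exact (hhom c hc x).ge
  · -- `0 = p 0 ≤ p (c • x) + p ((-c) • x)` and the second term is `-c * p x`.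
    have h := hadd (c • x) ((-c) • x)
    rw [← add_smul, add_neg_cancel, zero_smul, apply_zero_of_posHomogeneous hhom,
      hhom (-c) (by linarith)] at h
    linarith

lemma convexOn_univ_of_sublinear (hhom : ∀ t : ℝ, 0 ≤ t → ∀ x, p (t • x) = t * p x)
    (hadd : ∀ x y, p (x + y) ≤ p x + p y) : ConvexOn ℝ univ p :=
  ⟨convex_univ, fun x _ y _ a b ha hb _ =>
    calc p (a • x + b • y) ≤ p (a • x) + p (b • y) := hadd _ _
      _ = a • p x + b • p y := by rw [hhom a ha, hhom b hb, smul_eq_mul, smul_eq_mul]⟩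

lemma exists_linearMap_le_of_sublinear_eq (hhom : ∀ t : ℝ, 0 ≤ t → ∀ x, p (t • x) = t * p x)
    (hadd : ∀ x y, p (x + y) ≤ p x + p y) (x₀ : V) :
    ∃ g : V →ₗ[ℝ] ℝ, (∀ x, g x ≤ p x) ∧ g x₀ = p x₀ := by
  have hker : ∀ c : ℝ, c • x₀ = 0 → c • p x₀ = 0 := by
    intro c hc
    rcases smul_eq_zero.1 hc with rfl | rfl
    · exact zero_smul _ _
    · rw [apply_zero_of_posHomogeneous hhom, smul_zero]
  let f : V →ₗ.[ℝ] ℝ := LinearPMap.mkSpanSingleton' x₀ (p x₀) hker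
  have hf : ∀ z : f.domain, f z ≤ p z := by
    rintro ⟨z, hz⟩
    obtain ⟨c, rfl⟩ := Submodule.mem_span_singleton.1 hz
    exact (LinearPMap.mkSpanSingleton'_apply x₀ (p x₀) hker c hz).trans_le
      (mul_le_apply_smul_of_sublinear hhom hadd c x₀)
  obtain ⟨g, hgf, hgp⟩ :=
    exists_extension_of_le_sublinear f p (fun c hc => hhom c hc.le) hadd hf
  exact ⟨g, hgp, (hgf ⟨x₀, Submodule.mem_span_singleton_self x₀⟩).trans
    (LinearPMap.mkSpanSingleton'_apply_self _ _ _ _)⟩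

end Sublinear

section SupportFunction

variable {E : Type*} [NormedAddCommGroup E] [InnerProductSpace ℝ E]

/-- The vectors representing linear minorants of `p`, i.e. the subdifferential of `p` at `0`
when `p` is sublinear. -/
def innerMinorants (p : E → ℝ) : Set E :=
  {y | ∀ x, ⟪x, y⟫ ≤ p x}

lemma isClosed_innerMinorants (p : E → ℝ) : IsClosed (innerMinorants p) := by
  rw [innerMinorants, ofPred_forall]
  exact isClosed_iInter fun x => isClosed_le (continuous_const.inner continuous_id) continuous_const

lemma convex_innerMinorants (p : E → ℝ) : Convex ℝ (innerMinorants p) := by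
  rw [innerMinorants, ofPred_forall]
  exact convex_iInter fun x => convex_halfSpace_le (innerₛₗ ℝ x).isLinear (p x)

lemma isBounded_innerMinorants {p : E → ℝ} (hp : BddAbove (p '' closedBall 0 1)) :
    Bornology.IsBounded (innerMinorants p) := by
  obtain ⟨C, hC⟩ := hp
  refine isBounded_iff_forall_norm_le.2 ⟨C, fun y hy => ?_⟩
  have hball : ‖y‖⁻¹ • y ∈ closedBall (0 : E) 1 := by
    rw [mem_closedBall_zero_iff, norm_smul, norm_inv, norm_norm]
    exact inv_mul_le_one_of_le₀ le_rfl (norm_nonneg y)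
  have hinner : ⟪‖y‖⁻¹ • y, y⟫ = ‖y‖ := by
    rw [real_inner_smul_left, real_inner_self_eq_norm_sq]
    field_simp
  calc ‖y‖ = ⟪‖y‖⁻¹ • y, y⟫ := hinner.symm
    _ ≤ p (‖y‖⁻¹ • y) := hy _
    _ ≤ C := hC (mem_image_of_mem p hball)

noncomputable def supportFunction (K : Set E) (x : E) : ℝ :=
  sSup ((fun y => ⟪x, y⟫) '' K)

lemma bddAbove_image_inner {K : Set E} (hK : IsCompact K) (x : E) :
    BddAbove ((fun y => ⟪x, y⟫) '' K) :=
  (hK.image (continuous_const.inner continuous_id)).bddAbove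

lemma inner_le_supportFunction {K : Set E} (hK : IsCompact K) {y : E} (hy : y ∈ K) (x : E) :
    ⟪x, y⟫ ≤ supportFunction K x :=
  le_csSup (bddAbove_image_inner hK x) (mem_image_of_mem _ hy)

lemma supportFunction_le {K : Set E} (hne : K.Nonempty) {x : E} {c : ℝ}
    (h : ∀ y ∈ K, ⟪x, y⟫ ≤ c) : supportFunction K x ≤ c :=
  csSup_le (hne.image _) (forall_mem_image.2 h)

lemma supportFunction_smul (K : Set E) {t : ℝ} (ht : 0 ≤ t) (x : E) :
    supportFunction K (t • x) = t * supportFunction K x := by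
  have himg : (fun y => ⟪t • x, y⟫) '' K = t • ((fun y => ⟪x, y⟫) '' K) := by
    rw [← image_smul, image_image]
    exact image_congr fun y _ => real_inner_smul_left x y t
  rw [supportFunction, himg, Real.sSup_smul_of_nonneg ht, smul_eq_mul, supportFunction]

lemma supportFunction_add_le {K : Set E} (hne : K.Nonempty) (hK : IsCompact K) (x₁ x₂ : E) :
    supportFunction K (x₁ + x₂) ≤ supportFunction K x₁ + supportFunction K x₂ :=
  supportFunction_le hne fun y hy => by
    rw [inner_add_left]
    exact add_le_add (inner_le_supportFunction hK hy x₁) (inner_le_supportFunction hK hy x₂)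

lemma mem_of_forall_inner_le_supportFunction [CompleteSpace E] {K : Set E} (hne : K.Nonempty)
    (hcl : IsClosed K) (hconv : Convex ℝ K) {y : E} (hy : ∀ x, ⟪x, y⟫ ≤ supportFunction K x) :
    y ∈ K := by
  by_contra hyK
  obtain ⟨f, u, hfK, hfy⟩ := geometric_hahn_banach_closed_point hconv hcl hyK
  set x := (InnerProductSpace.toDual ℝ E).symm f
  have hx : ∀ z, ⟪x, z⟫ = f z := fun z => InnerProductSpace.toDual_symm_apply
  have hKu : supportFunction K x ≤ u := supportFunction_le hne fun z hz => (hx z ▸ hfK z hz).le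
  linarith [hy x, hx y]

lemma innerMinorants_supportFunction [CompleteSpace E] {K : Set E} (hne : K.Nonempty)
    (hK : IsCompact K) (hconv : Convex ℝ K) : innerMinorants (supportFunction K) = K :=
  Set.ext fun _ => ⟨mem_of_forall_inner_le_supportFunction hne hK.isClosed hconv,
    fun hy x => inner_le_supportFunction hK hy x⟩

end SupportFunction

section FiniteDimensional

variable {E : Type*} [NormedAddCommGroup E] [InnerProductSpace ℝ E] [FiniteDimensional ℝ E]
  {p : E → ℝ}

lemma isCompact_innerMinorants (hhom : ∀ t : ℝ, 0 ≤ t → ∀ x, p (t • x) = t * p x)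
    (hadd : ∀ x y, p (x + y) ≤ p x + p y) : IsCompact (innerMinorants p) := by
  have hcont : Continuous p :=
    continuousOn_univ.1 ((convexOn_univ_of_sublinear hhom hadd).continuousOn isOpen_univ)
  exact isCompact_of_isClosed_isBounded (isClosed_innerMinorants p)
    (isBounded_innerMinorants ((isCompact_closedBall 0 1).bddAbove_image hcont.continuousOn))

lemma exists_mem_innerMinorants_inner_eq (hhom : ∀ t : ℝ, 0 ≤ t → ∀ x, p (t • x) = t * p x)
    (hadd : ∀ x y, p (x + y) ≤ p x + p y) (x₀ : E) :
    ∃ y ∈ innerMinorants p, ⟪x₀, y⟫ = p x₀ := by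
  have := FiniteDimensional.complete ℝ E
  obtain ⟨g, hgp, hgx₀⟩ := exists_linearMap_le_of_sublinear_eq hhom hadd x₀
  set y := (InnerProductSpace.toDual ℝ E).symm (LinearMap.toContinuousLinearMap g)
  have hy : ∀ x, ⟪x, y⟫ = g x := fun x => by
    rw [real_inner_comm]
    exact InnerProductSpace.toDual_symm_apply
  exact ⟨y, fun x => (hy x).trans_le (hgp x), (hy x₀).trans hgx₀⟩

lemma supportFunction_innerMinorants (hhom : ∀ t : ℝ, 0 ≤ t → ∀ x, p (t • x) = t * p x)
    (hadd : ∀ x y, p (x + y) ≤ p x + p y) : supportFunction (innerMinorants p) = p := by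
  funext x
  obtain ⟨y, hy, hxy⟩ := exists_mem_innerMinorants_inner_eq hhom hadd x
  exact le_antisymm (supportFunction_le ⟨y, hy⟩ fun z hz => hz x)
    (hxy ▸ inner_le_supportFunction (isCompact_innerMinorants hhom hadd) hy x)

end FiniteDimensional

/-- Minkowski duality: every sublinear `p : ℝ^N → ℝ` is the support function of a unique
nonempty compact convex set `K ⊆ ℝ^N`, and conversely the support function of any nonempty
compact convex set is sublinear. -/
theorem minkowski_duality {N : ℕ} :
    (∀ p : EuclideanSpace ℝ (Fin N) → ℝ, Sublinear N p →
      ∃! K : Set (EuclideanSpace ℝ (Fin N)),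
        K.Nonempty ∧ IsCompact K ∧ Convex ℝ K ∧
        ∀ x, p x = sSup ((fun y => ⟪x, y⟫) '' K)) ∧
    (∀ K : Set (EuclideanSpace ℝ (Fin N)),
      K.Nonempty → IsCompact K → Convex ℝ K →
      Sublinear N fun x => sSup ((fun y => ⟪x, y⟫) '' K)) := by
  refine ⟨fun p ⟨hhom, hadd⟩ => ?_, fun K hne hK _ =>
    ⟨fun t ht x => supportFunction_smul K ht x, supportFunction_add_le hne hK⟩⟩
  have hsupp := supportFunction_innerMinorants hhom hadd
  obtain ⟨y, hy, -⟩ := exists_mem_innerMinorants_inner_eq hhom hadd 0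
  refine ⟨innerMinorants p, ⟨⟨y, hy⟩, isCompact_innerMinorants hhom hadd,
    convex_innerMinorants p, fun x => (congrFun hsupp x).symm⟩, ?_⟩
  rintro K ⟨hne, hK, hconv, hpK⟩
  have hKp : supportFunction K = p := funext fun x => (hpK x).symm
  rw [← hKp, innerMinorants_supportFunction hne hK hconv]
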